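/- arXiv:2402.06980 — 2 statements merged into one kernel-verified Lean document; each statement's English description precedes it below -/
import Mathlib

section
/- Let X be a finite set, let τ be a fixed-point-free involutive permutation of X, let σ be a permutation of X, and let A ⊆ X satisfy τ(A) = A. For a permutation ρ of X, let ρ_A denote the first-return permutation of A: for x ∈ A, ρ_A(x) = ρ^k(x) where k is the least positive integer with ρ^k(x) ∈ A, and let τ|_A denote the restriction of τ to A. Define v(G[A]) = the number of orbits of σ on X that meet A, f(G[A]) = the number of orbits on A of τ|_A ∘ σ_A, v(G*[A]) = the number of orbits of τ∘σ on X that meet A, and f(G*[A]) = the number of orbits on A of τ|_A ∘ (τ∘σ)_A. Then γ(π_A ∘ σ, τ) − γ(σ, τ) = v(G[A]) + v(G*[A]) − f(G[A]) − f(G*[A]). (Proposition 6.1 expressed via rotation systems.) -/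
/-- The partial-duality permutation `π_A` of a rotation system: it agrees with the
edge involution `τ` on the τ-invariant set `A` of half-edges and is the identity
off `A`. -/
def piPerm {X : Type*} [DecidableEq X] (τ : Equiv.Perm X) (A : Finset X)
    (hτ : ∀ x, τ (τ x) = x) (hA : A.image τ = A) : Equiv.Perm X where
  toFun x := if x ∈ A then τ x else x
  invFun x := if x ∈ A then τ x else x
  left_inv x := by
    by_cases hx : x ∈ A
    · have hτx : τ x ∈ A := by rw [← hA]; exact Finset.mem_image_of_mem τ hx
      simp [hx, hτx, hτ]
    · simp [hx]
  right_inv x := by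
    by_cases hx : x ∈ A
    · have hτx : τ x ∈ A := by rw [← hA]; exact Finset.mem_image_of_mem τ hx
      simp [hx, hτx, hτ]
    · simp [hx]

/-- The Euler genus `γ(σ, τ) = 2c − v + |X|/2 − f` of a rotation system `(σ, τ)` on
the finite set `X` of half-edges, where `v`, `f` and `c` are the numbers of orbits
of `σ`, of `τ∘σ`, and of the subgroup generated by `σ` and `τ`, respectively. -/
noncomputable def eulerGenus {X : Type*} [Fintype X] (σ τ : Equiv.Perm X) : ℤ :=
  2 * (Nat.card (MulAction.orbitRel.Quotient
        (Subgroup.closure {σ, τ} : Subgroup (Equiv.Perm X)) X) : ℤ)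
    - (Nat.card (MulAction.orbitRel.Quotient (Subgroup.zpowers σ) X) : ℤ)
    + (Fintype.card X : ℤ) / 2
    - (Nat.card (MulAction.orbitRel.Quotient (Subgroup.zpowers (τ * σ)) X) : ℤ)

/-- The orbit equivalence of the iteration of a map `f` (for a bijection of a finite
set this relation identifies `x` and `y` exactly when they lie in the same orbit of
the permutation `f`). -/
def fnSetoid {α : Type*} (f : α → α) : Setoid α where
  r x y := ∃ m n : ℕ, f^[m] x = f^[n] y
  iseqv := by
    constructor
    · intro x; exact ⟨0, 0, rfl⟩
    · rintro x y ⟨m, n, h⟩; exact ⟨n, m, h.symm⟩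
    · rintro x y z ⟨m, n, h1⟩ ⟨p, q, h2⟩
      refine ⟨p + m, n + q, ?_⟩
      calc f^[p + m] x = f^[p] (f^[m] x) := Function.iterate_add_apply f p m x
        _ = f^[p] (f^[n] y) := by rw [h1]
        _ = f^[n] (f^[p] y) := by
              rw [← Function.iterate_add_apply, ← Function.iterate_add_apply, Nat.add_comm]
        _ = f^[n] (f^[q] z) := by rw [h2]
        _ = f^[n + q] z := (Function.iterate_add_apply f n q z).symm

/-- The number of orbits of a map `f` on a finite set. -/
noncomputable def fnOrbitCount {α : Type*} (f : α → α) : ℕ :=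
  Nat.card (Quotient (fnSetoid f))

/-- The first-return map `ρ_A` of a permutation `ρ` to a subset `A`: for `x ∈ A`,
`ρ_A x = ρ^k x` where `k` is the least positive integer with `ρ^k x ∈ A`. -/
noncomputable def firstReturn {X : Type*} [Fintype X] [DecidableEq X]
    (ρ : Equiv.Perm X) (A : Finset X) (x : {a // a ∈ A}) : {a // a ∈ A} :=
  have h : ∃ k, 0 < k ∧ (ρ ^ k) x.1 ∈ A :=
    ⟨orderOf ρ, orderOf_pos ρ, by rw [pow_orderOf_eq_one]; simp only [Equiv.Perm.coe_one, id_eq]; exact x.2⟩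
  ⟨(ρ ^ Nat.find h) x.1, (Nat.find_spec h).2⟩

/-- The restriction `τ|_A` of the involution `τ` to the τ-invariant subset `A`. -/
def restrictTau {X : Type*} [DecidableEq X] (τ : Equiv.Perm X) (A : Finset X)
    (hA : A.image τ = A) (x : {a // a ∈ A}) : {a // a ∈ A} :=
  ⟨τ x.1, by
    have h : τ x.1 ∈ A.image τ := Finset.mem_image_of_mem τ x.2
    rwa [hA] at h⟩

/-- The number of orbits of the permutation `σ` on `X` that meet the subset `A`. -/
noncomputable def orbitsMeeting {X : Type*} [Fintype X] (σ : Equiv.Perm X)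
    (A : Finset X) : ℕ :=
  Nat.card ((Quotient.mk (MulAction.orbitRel (Subgroup.zpowers σ) X)) '' (A : Set X))

/-! Write `π = π_A`. Since `π` moves each half-edge at most to its `τ`-partner, `π ∘ σ` and `σ`
generate, together with `τ`, the same orbits, so the number of components is unchanged. As `π`
commutes with `τ`, also `τ ∘ π ∘ σ = π ∘ (τ ∘ σ)`, so vertices and faces both change under the
same operation `ρ ↦ π ∘ ρ`. This operation leaves the orbits of `ρ` avoiding `A` untouched, while
the orbits meeting `A` correspond to the orbits of the first-return map `ρ_A`, and
`(π ∘ ρ)_A = τ|_A ∘ ρ_A`. Hence the number of orbits changes by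
`#orbits(τ|_A ∘ ρ_A) − #{orbits of ρ meeting A}`; applying this to `ρ = σ` and `ρ = τ ∘ σ`
gives the formula. -/

open Equiv MulAction

section Orbits

variable {X : Type*} {ρ : Perm X} {x y : X}

theorem orbitRel_zpowers_apply : orbitRel (Subgroup.zpowers ρ) X x y ↔ ρ.SameCycle y x := by
  simp only [orbitRel_apply, mem_orbit_iff, Subtype.exists, Subgroup.mem_zpowers_iff,
    exists_prop, exists_exists_eq_and, Subgroup.mk_smul, Perm.smul_def]
  rfl

variable [Finite X]

theorem fnSetoid_perm_apply : fnSetoid ρ x y ↔ ρ.SameCycle x y := by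
  constructor
  · rintro ⟨m, n, h⟩
    rw [Perm.iterate_eq_pow, Perm.iterate_eq_pow] at h
    rw [← Perm.sameCycle_pow_left (n := m), ← Perm.sameCycle_pow_right (n := n), h]
  · intro h
    obtain ⟨k, -, hk⟩ := h.exists_pow_eq'
    exact ⟨k, 0, by rw [Perm.iterate_eq_pow, hk]; rfl⟩

theorem fnSetoid_perm_iff_exists_iterate : fnSetoid ρ x y ↔ ∃ k, ρ^[k] x = y :=
  fnSetoid_perm_apply.trans ⟨fun h => h.exists_pow_eq'.imp fun k hk => by
    rw [Perm.iterate_eq_pow, hk.2], fun ⟨k, hk⟩ =>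
    ⟨k, by rw [zpow_natCast, ← Perm.iterate_eq_pow, hk]⟩⟩

theorem orbitRel_zpowers_eq_fnSetoid (ρ : Perm X) :
    orbitRel (Subgroup.zpowers ρ) X = fnSetoid ρ := by
  ext x y
  rw [orbitRel_zpowers_apply, fnSetoid_perm_apply]
  exact Perm.sameCycle_comm

theorem card_orbitRel_zpowers (ρ : Perm X) :
    Nat.card (orbitRel.Quotient (Subgroup.zpowers ρ) X) = fnOrbitCount ρ := by
  rw [orbitRel.Quotient, orbitRel_zpowers_eq_fnSetoid, fnOrbitCount]

theorem orbitsMeeting_eq {X : Type*} [Fintype X] (ρ : Perm X) (A : Finset X) :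
    orbitsMeeting ρ A = Nat.card (Quotient.mk (fnSetoid ρ) '' (A : Set X)) := by
  rw [orbitsMeeting, orbitRel_zpowers_eq_fnSetoid]

end Orbits

section QuotientsAndIterates

variable {α : Type*}

theorem card_image_quotientMk (r : Setoid α) (s : Set α) :
    Nat.card (Quotient.mk r '' s) = Nat.card (Quotient (r.comap ((↑) : s → α))) := by
  rw [Set.image_eq_range]
  exact (Nat.card_congr (Setoid.comapQuotientEquiv _ r)).symm

theorem card_image_quotientMk_congr {r r' : Setoid α} {s : Set α}
    (h : ∀ x ∈ s, ∀ y ∈ s, r x y ↔ r' x y) :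
    Nat.card (Quotient.mk r '' s) = Nat.card (Quotient.mk r' '' s) := by
  rw [card_image_quotientMk, card_image_quotientMk]
  congr 2
  ext ⟨x, hx⟩ ⟨y, hy⟩
  exact h x hx y hy

theorem iterate_eq_iterate_of_forall_le {f g : α → α} {s : Set α}
    (hfg : ∀ y, f y ∉ s → g y = f y) {x : α} {n : ℕ} (hn : ∀ i, 0 < i → i ≤ n → f^[i] x ∉ s) :
    g^[n] x = f^[n] x := by
  induction n with
  | zero => rfl
  | succ n ih =>
    rw [Function.iterate_succ_apply', Function.iterate_succ_apply',
      ih fun i hi hin => hn i hi (by omega)]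
    apply hfg
    rw [← Function.iterate_succ_apply' f]
    exact hn (n + 1) n.succ_pos le_rfl

theorem iterate_eq_iterate_of_forall {f g : α → α} {s : Set α}
    (hfg : ∀ y, f y ∉ s → g y = f y) {x : α} (hx : ∀ n, f^[n] x ∉ s) (n : ℕ) :
    g^[n] x = f^[n] x :=
  iterate_eq_iterate_of_forall_le hfg fun i _ _ => hx i

end QuotientsAndIterates

section FirstReturn

variable {X : Type*} [Fintype X] [DecidableEq X] {ρ : Perm X} {A : Finset X}

theorem exists_firstReturn_eq_pow (x : A) :
    ∃ k, 0 < k ∧ (firstReturn ρ A x : X) = (ρ ^ k) x ∧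
      ∀ j, 0 < j → j < k → (ρ ^ j) (x : X) ∉ A := by
  have h : ∃ k, 0 < k ∧ (ρ ^ k) (x : X) ∈ A :=
    ⟨orderOf ρ, orderOf_pos ρ, by simp [pow_orderOf_eq_one]⟩
  exact ⟨Nat.find h, (Nat.find_spec h).1, rfl, fun _ hj hjk hmem => Nat.find_min h hjk ⟨hj, hmem⟩⟩

theorem firstReturn_coe_eq_pow {x : A} {k : ℕ} (hk : 0 < k) (hmem : (ρ ^ k) (x : X) ∈ A)
    (hmin : ∀ j, 0 < j → j < k → (ρ ^ j) (x : X) ∉ A) :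
    (firstReturn ρ A x : X) = (ρ ^ k) x := by
  obtain ⟨k', hk', heq, hmin'⟩ := exists_firstReturn_eq_pow (ρ := ρ) x
  obtain rfl : k' = k := le_antisymm
    (not_lt.1 fun h => hmin' k hk h hmem)
    (not_lt.1 fun h => hmin k' hk' h (heq ▸ (firstReturn ρ A x).2))
  exact heq

theorem exists_iterate_firstReturn_coe_eq_pow (m : ℕ) (x : A) :
    ∃ K, ((firstReturn ρ A)^[m] x : X) = (ρ ^ K) x := by
  induction m generalizing x with
  | zero => exact ⟨0, rfl⟩
  | succ m ih =>
    obtain ⟨k, -, hk, -⟩ := exists_firstReturn_eq_pow (ρ := ρ) x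
    obtain ⟨K, hK⟩ := ih (firstReturn ρ A x)
    exact ⟨K + k, by rw [Function.iterate_succ_apply, hK, hk, pow_add, Perm.mul_apply]⟩

theorem exists_iterate_firstReturn_eq {x y : A} {k : ℕ} (h : (ρ ^ k) (x : X) = y) :
    ∃ m, (firstReturn ρ A)^[m] x = y := by
  induction k using Nat.strong_induction_on generalizing x with
  | _ k ih =>
    obtain rfl | hk := Nat.eq_zero_or_pos k
    · exact ⟨0, Subtype.ext h⟩
    obtain ⟨j, hj0, hj, hmin⟩ := exists_firstReturn_eq_pow (ρ := ρ) x
    have hjk : j ≤ k := not_lt.1 fun hkj => hmin k hk hkj (h ▸ y.2)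
    obtain ⟨m, hm⟩ := ih (k - j) (by omega) (x := firstReturn ρ A x) (by
      rw [hj, ← Perm.mul_apply, ← pow_add, Nat.sub_add_cancel hjk, h])
    exact ⟨m + 1, hm⟩

theorem comap_fnSetoid_eq_fnSetoid_firstReturn :
    (fnSetoid ρ).comap ((↑) : A → X) = fnSetoid (firstReturn ρ A) := by
  ext x y
  rw [Setoid.comap_rel]
  constructor
  · intro h
    obtain ⟨k, hk⟩ := fnSetoid_perm_iff_exists_iterate.1 h
    obtain ⟨m, hm⟩ :=
      exists_iterate_firstReturn_eq (ρ := ρ) (k := k) (by rwa [← Perm.iterate_eq_pow])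
    exact ⟨m, 0, hm⟩
  · rintro ⟨m, n, hmn⟩
    obtain ⟨K, hK⟩ := exists_iterate_firstReturn_coe_eq_pow (ρ := ρ) m x
    obtain ⟨L, hL⟩ := exists_iterate_firstReturn_coe_eq_pow (ρ := ρ) n y
    exact ⟨K, L, by rw [Perm.iterate_eq_pow, Perm.iterate_eq_pow, ← hK, ← hL, hmn]⟩

theorem card_image_mk_eq_fnOrbitCount_firstReturn :
    Nat.card (Quotient.mk (fnSetoid ρ) '' (A : Set X)) = fnOrbitCount (firstReturn ρ A) := by
  rw [card_image_quotientMk, fnOrbitCount, ← comap_fnSetoid_eq_fnSetoid_firstReturn]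
  rfl

end FirstReturn

section AvoidingOrbits

variable {X : Type*} [Finite X]

theorem compl_image_mk_eq_image_avoiding (ρ : Perm X) (s : Set X) :
    (Quotient.mk (fnSetoid ρ) '' s)ᶜ = Quotient.mk (fnSetoid ρ) '' {x | ∀ n, ρ^[n] x ∉ s} := by
  ext c
  induction c using Quotient.inductionOn with | h x => ?_
  simp only [Set.mem_compl_iff, Set.mem_image, Quotient.eq, Set.mem_ofPred_eq, not_exists,
    not_and]
  constructor
  · intro hx
    refine ⟨x, fun n hn => hx _ hn ((fnSetoid ρ).symm ?_), (fnSetoid ρ).refl x⟩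
    exact fnSetoid_perm_iff_exists_iterate.2 ⟨n, rfl⟩
  · rintro ⟨y, hy, hyx⟩ a ha hax
    obtain ⟨k, rfl⟩ := fnSetoid_perm_iff_exists_iterate.1 ((fnSetoid ρ).trans hyx
      ((fnSetoid ρ).symm hax))
    exact hy k ha

theorem card_compl_image_mk_eq {ρ ρ' : Perm X} {s : Set X}
    (h : ∀ x, ρ x ∉ s → ρ' x = ρ x) (h' : ∀ x, ρ' x ∉ s → ρ x = ρ' x) :
    Nat.card ↥(Quotient.mk (fnSetoid ρ) '' s)ᶜ = Nat.card ↥(Quotient.mk (fnSetoid ρ') '' s)ᶜ := by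
  have avoiding_eq : {x | ∀ n, ρ^[n] x ∉ s} = {x | ∀ n, ρ'^[n] x ∉ s} := by
    ext x
    exact ⟨fun hx n => iterate_eq_iterate_of_forall h hx n ▸ hx n,
      fun hx n => iterate_eq_iterate_of_forall h' hx n ▸ hx n⟩
  rw [compl_image_mk_eq_image_avoiding, compl_image_mk_eq_image_avoiding, ← avoiding_eq]
  refine card_image_quotientMk_congr fun x hx y hy => ?_
  change (∃ m n : ℕ, _) ↔ ∃ m n : ℕ, _
  simp only [iterate_eq_iterate_of_forall h hx, iterate_eq_iterate_of_forall h hy]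

end AvoidingOrbits

section PartialDual

variable {X : Type*} [DecidableEq X] {τ : Perm X} {A : Finset X}

theorem apply_mem_iff_of_image_eq (hA : A.image τ = A) (x : X) : τ x ∈ A ↔ x ∈ A := by
  rw [← τ.injective.mem_finset_image (a := x), hA]

variable (hτ : ∀ x, τ (τ x) = x) (hA : A.image τ = A)

theorem piPerm_apply_of_mem {x : X} (hx : x ∈ A) : piPerm τ A hτ hA x = τ x := if_pos hx

theorem piPerm_apply_of_notMem {x : X} (hx : x ∉ A) : piPerm τ A hτ hA x = x := if_neg hx

theorem piPerm_apply_eq_or (x : X) : piPerm τ A hτ hA x = x ∨ piPerm τ A hτ hA x = τ x := by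
  by_cases hx : x ∈ A
  · exact .inr (piPerm_apply_of_mem hτ hA hx)
  · exact .inl (piPerm_apply_of_notMem hτ hA hx)

theorem piPerm_piPerm (x : X) : piPerm τ A hτ hA (piPerm τ A hτ hA x) = x :=
  (piPerm τ A hτ hA).symm_apply_apply x

theorem piPerm_apply_mem_iff (x : X) : piPerm τ A hτ hA x ∈ A ↔ x ∈ A := by
  rcases piPerm_apply_eq_or hτ hA x with h | h <;> rw [h]
  exact apply_mem_iff_of_image_eq hA x

theorem commute_piPerm : Commute (piPerm τ A hτ hA) τ := by
  ext x
  by_cases hx : x ∈ A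
  · have hτx := (apply_mem_iff_of_image_eq hA x).2 hx
    simp [piPerm_apply_of_mem hτ hA hx, piPerm_apply_of_mem hτ hA hτx]
  · have hτx := mt (apply_mem_iff_of_image_eq hA x).1 hx
    simp [piPerm_apply_of_notMem hτ hA hx, piPerm_apply_of_notMem hτ hA hτx]

variable [Fintype X]

theorem firstReturn_piPerm_mul (ρ : Perm X) :
    firstReturn (piPerm τ A hτ hA * ρ) A = restrictTau τ A hA ∘ firstReturn ρ A := by
  funext x
  obtain ⟨k, hk, hret, hmin⟩ := exists_firstReturn_eq_pow (ρ := ρ) x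
  have hmem : (ρ ^ k) (x : X) ∈ A := hret ▸ (firstReturn ρ A x).2
  have hagree : ∀ j < k, ((piPerm τ A hτ hA * ρ) ^ j) (x : X) = (ρ ^ j) x := by
    intro j hj
    rw [← Perm.iterate_eq_pow, ← Perm.iterate_eq_pow]
    refine iterate_eq_iterate_of_forall_le (s := A) (fun y hy => ?_) fun i hi hij => ?_
    · exact piPerm_apply_of_notMem hτ hA hy
    · rw [Perm.iterate_eq_pow]
      exact hmin i hi (by omega)
  have hreturn : ((piPerm τ A hτ hA * ρ) ^ k) (x : X) = τ ((ρ ^ k) x) := by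
    obtain ⟨j, rfl⟩ : ∃ j, k = j + 1 := ⟨k - 1, by omega⟩
    rw [pow_succ', Perm.mul_apply, hagree j (by omega), Perm.mul_apply,
      ← Perm.mul_apply ρ, ← pow_succ', piPerm_apply_of_mem hτ hA hmem]
  apply Subtype.ext
  change (firstReturn _ A x : X) = τ (firstReturn ρ A x : X)
  rw [hret, ← hreturn]
  refine firstReturn_coe_eq_pow hk ?_ fun j hj hjk => hagree j hjk ▸ hmin j hj hjk
  rw [hreturn, apply_mem_iff_of_image_eq hA]
  exact hmem

theorem fnOrbitCount_piPerm_mul_sub (ρ : Perm X) :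
    (fnOrbitCount (piPerm τ A hτ hA * ρ) : ℤ) - fnOrbitCount ρ =
      fnOrbitCount (restrictTau τ A hA ∘ firstReturn ρ A)
        - Nat.card (Quotient.mk (fnSetoid ρ) '' (A : Set X)) := by
  have hsplit (ρ : Perm X) : fnOrbitCount ρ = Nat.card (Quotient.mk (fnSetoid ρ) '' (A : Set X))
      + Nat.card ↥(Quotient.mk (fnSetoid ρ) '' (A : Set X))ᶜ := by
    rw [Nat.card_coe_set_eq, Nat.card_coe_set_eq, Set.ncard_add_ncard_compl, fnOrbitCount]
  have hcompl := card_compl_image_mk_eq (ρ := ρ) (ρ' := piPerm τ A hτ hA * ρ) (s := A)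
    (fun x hx => piPerm_apply_of_notMem hτ hA hx)
    (fun x hx => (piPerm_apply_of_notMem hτ hA
      (mt (piPerm_apply_mem_iff hτ hA (ρ x)).2 hx)).symm)
  rw [hsplit (piPerm τ A hτ hA * ρ), hsplit ρ, card_image_mk_eq_fnOrbitCount_firstReturn,
    card_image_mk_eq_fnOrbitCount_firstReturn, firstReturn_piPerm_mul, ← hcompl]
  push_cast
  ring

end PartialDual

section Components

variable {α : Type*}

def orbitPreserving (G : Subgroup (Perm α)) : Subgroup (Perm α) where
  carrier := {g | ∀ y, g y ∈ orbit G y}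
  one_mem' := mem_orbit_self
  mul_mem' {g h} hg hh y := orbit_eq_iff.2 (hh y) ▸ hg (h y)
  inv_mem' {g} hg y := mem_orbit_symm.1 (by simpa using hg (g⁻¹ y))

theorem orbitRel_closure_le {S : Set (Perm α)} {G : Subgroup (Perm α)}
    (hS : ∀ s ∈ S, ∀ y, s y ∈ orbit G y) : orbitRel (Subgroup.closure S) α ≤ orbitRel G α := by
  rintro x y ⟨⟨g, hg⟩, rfl⟩
  exact (Subgroup.closure_le (orbitPreserving G)).2 hS hg y

theorem orbitRel_closure_pair_le {ρ ρ' τ : Perm α} (h : ∀ z, ρ' z = ρ z ∨ ρ' z = τ (ρ z)) :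
    orbitRel (Subgroup.closure {ρ', τ}) α ≤ orbitRel (Subgroup.closure {ρ, τ}) α := by
  set G := Subgroup.closure ({ρ, τ} : Set (Perm α))
  have hG (g : Perm α) (hg : g ∈ G) (y : α) : g y ∈ orbit G y := mem_orbit y (⟨g, hg⟩ : G)
  have hρ : ρ ∈ G := Subgroup.subset_closure (by simp)
  have hτ : τ ∈ G := Subgroup.subset_closure (by simp)
  refine orbitRel_closure_le ?_
  rintro s (rfl | rfl) y
  · rcases h y with e | e <;> rw [e]
    · exact hG ρ hρ y
    · exact hG (τ * ρ) (mul_mem hτ hρ) y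
  · exact hG s hτ y

end Components

theorem partial_dual_genus_change_general {X : Type*} [Fintype X] [DecidableEq X]
    (τ σ : Equiv.Perm X) (hτ : ∀ x, τ (τ x) = x)
    (A : Finset X) (hA : A.image τ = A) :
    eulerGenus (piPerm τ A hτ hA * σ) τ - eulerGenus σ τ =
      (orbitsMeeting σ A : ℤ) + (orbitsMeeting (τ * σ) A : ℤ)
        - (fnOrbitCount (restrictTau τ A hA ∘ firstReturn σ A) : ℤ)
        - (fnOrbitCount (restrictTau τ A hA ∘ firstReturn (τ * σ) A) : ℤ) := by
  set π := piPerm τ A hτ hA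
  have hcomponents : orbitRel (Subgroup.closure {π * σ, τ}) X =
      orbitRel (Subgroup.closure {σ, τ}) X := by
    refine le_antisymm (orbitRel_closure_pair_le fun z => piPerm_apply_eq_or hτ hA (σ z))
      (orbitRel_closure_pair_le fun z => ?_)
    have := piPerm_apply_eq_or hτ hA (π (σ z))
    rwa [piPerm_piPerm] at this
  have hvertices := fnOrbitCount_piPerm_mul_sub hτ hA σ
  have hfaces := fnOrbitCount_piPerm_mul_sub hτ hA (τ * σ)
  rw [← mul_assoc, (commute_piPerm hτ hA).eq, mul_assoc] at hfaces
  simp only [eulerGenus, orbitRel.Quotient, hcomponents, card_orbitRel_zpowers, orbitsMeeting_eq]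
  linarith

/-- **Proposition 6.1 via rotation systems.**  Let `(σ, τ)` be a rotation system on
the finite set `X` of half-edges (`τ` a fixed-point-free involution) and let
`A ⊆ X` be τ-invariant.  Then the change of Euler genus under partial duality
relative to `A` is
`γ(π_A∘σ, τ) − γ(σ, τ) = v(G[A]) + v(G*[A]) − f(G[A]) − f(G*[A])`, where
`v(G[A])` (resp. `v(G*[A])`) is the number of orbits of `σ` (resp. of `τ∘σ`)
meeting `A`, and `f(G[A])` (resp. `f(G*[A])`) is the number of orbits on `A` of
`τ|_A ∘ σ_A` (resp. of `τ|_A ∘ (τ∘σ)_A`), `ρ_A` denoting the first-return map. -/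
theorem partial_dual_genus_change {X : Type*} [Fintype X] [DecidableEq X]
    (τ σ : Equiv.Perm X) (hτ : ∀ x, τ (τ x) = x) (hfp : ∀ x, τ x ≠ x)
    (A : Finset X) (hA : A.image τ = A) :
    eulerGenus (piPerm τ A hτ hA * σ) τ - eulerGenus σ τ =
      (orbitsMeeting σ A : ℤ) + (orbitsMeeting (τ * σ) A : ℤ)
        - (fnOrbitCount (restrictTau τ A hA ∘ firstReturn σ A) : ℤ)
        - (fnOrbitCount (restrictTau τ A hA ∘ firstReturn (τ * σ) A) : ℤ) :=
  partial_dual_genus_change_general τ σ hτ A hA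
end

section
/- Let X be a finite set, let τ₀, τ₁, τ₂ be fixed-point-free involutive permutations of X, and let p, q, r, s ∈ X be pairwise distinct with τ₀(p) = s, τ₀(q) = r, τ₂(p) = q and τ₂(r) = s. Then the subgroup of the permutation group of X generated by τ₀ ∘ κ, τ₁ and τ₂ ∘ κ, where κ = τ₀ᵉ ∘ τ₂ᵉ, has exactly the same orbits on X as the subgroup generated by τ₀, τ₁ and τ₂. In particular, partial duality relative to an edge preserves the number of connected components of a (possibly non-orientable) ribbon graph. (Lemma 2.3(f) expressed via bi-rotation systems.) -/
/-- `τ₀ᵉ`, the permutation swapping the flags `p ↔ s` and `q ↔ r` of an edge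
(with `τ₀ p = s` and `τ₀ q = r`) and fixing all other flags. -/
def tau0e {X : Type*} [DecidableEq X] (p q r s : X) : Equiv.Perm X :=
  Equiv.swap p s * Equiv.swap q r

/-- `τ₂ᵉ`, the permutation swapping the flags `p ↔ q` and `r ↔ s` of an edge
(with `τ₂ p = q` and `τ₂ r = s`) and fixing all other flags. -/
def tau2e {X : Type*} [DecidableEq X] (p q r s : X) : Equiv.Perm X :=
  Equiv.swap p q * Equiv.swap r s

/-- `κ := τ₀ᵉ ∘ τ₂ᵉ`, the permutation used in the partial-dual construction for
bi-rotation systems: the partial dual of `(τ₀, τ₁, τ₂)` relative to the edge `e`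
with flags `p, q, r, s` is `(τ₀ ∘ κ, τ₁, τ₂ ∘ κ)`. -/
def kappaE {X : Type*} [DecidableEq X] (p q r s : X) : Equiv.Perm X :=
  tau0e p q r s * tau2e p q r s

/-!
Off the four flags of the edge, `κ` is the identity, so `τ₀ ∘ κ` and `τ₂ ∘ κ` agree with `τ₀` and
`τ₂` there; on the edge, `κ = (p r)(q s)` and one checks that `τ₀ ∘ κ` agrees with `τ₂` and
`τ₂ ∘ κ` with `τ₀`. So at every flag each new generator agrees with an old one and vice versa.
Since the permutations moving every point within its `H`-orbit form a subgroup, the two generated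
subgroups then have the same orbits.
-/

namespace MulAction

variable {G : Type*} (X : Type*) [Group G] [MulAction G X]

def orbitPreserving (H : Subgroup G) : Subgroup G where
  carrier := {g | ∀ x : X, g • x ∈ orbit H x}
  one_mem' x := by rw [one_smul]; exact mem_orbit_self x
  mul_mem' {a b} ha hb x := by
    rw [mul_smul, ← orbit_eq_iff.mpr (hb x)]
    exact ha (b • x)
  inv_mem' {g} hg x := by
    have h := hg (g⁻¹ • x)
    rw [smul_inv_smul] at h
    exact mem_orbit_symm.mp h

variable {X}

theorem orbit_closure_subset_of_forall_exists {S T : Set G}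
    (h : ∀ g ∈ S, ∀ x : X, ∃ t ∈ T, g • x = t • x) (x : X) :
    orbit (Subgroup.closure S) x ⊆ orbit (Subgroup.closure T) x := by
  have hle : Subgroup.closure S ≤ orbitPreserving X (Subgroup.closure T) :=
    (Subgroup.closure_le _).mpr fun g hg y => by
      obtain ⟨t, ht, hgt⟩ := h g hg y
      rw [hgt]
      exact ⟨⟨t, Subgroup.subset_closure ht⟩, rfl⟩
  rintro _ ⟨⟨g, hg⟩, rfl⟩
  exact hle hg x

theorem orbit_closure_triple_eq_of_pointwise_swap {a b c a' b' : G}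
    (h : ∀ x : X, (a' • x = a • x ∧ b' • x = b • x) ∨ (a' • x = b • x ∧ b' • x = a • x))
    (x : X) :
    orbit (Subgroup.closure {a', c, b'}) x = orbit (Subgroup.closure {a, c, b}) x := by
  apply subset_antisymm <;> apply orbit_closure_subset_of_forall_exists <;>
    rintro g (rfl | rfl | rfl) y <;> rcases h y with ⟨ha, hb⟩ | ⟨ha, hb⟩ <;> simp [ha, hb]

end MulAction

section Edge

variable {X : Type*} [DecidableEq X] {p q r s : X}

theorem kappaE_eq_swap_mul_swap
    (hpq : p ≠ q) (hpr : p ≠ r) (hps : p ≠ s) (hqr : q ≠ r) (hqs : q ≠ s) (hrs : r ≠ s) :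
    kappaE p q r s = Equiv.swap p r * Equiv.swap q s := by
  ext x
  simp only [kappaE, tau0e, tau2e, Equiv.Perm.mul_apply, Equiv.swap_apply_def]
  split_ifs <;> simp_all

theorem mul_kappaE_apply_cases {τ₀ τ₂ : Equiv.Perm X}
    (h0inv : ∀ x, τ₀ (τ₀ x) = x) (h2inv : ∀ x, τ₂ (τ₂ x) = x)
    (hpq : p ≠ q) (hpr : p ≠ r) (hps : p ≠ s) (hqr : q ≠ r) (hqs : q ≠ s) (hrs : r ≠ s)
    (e0p : τ₀ p = s) (e0q : τ₀ q = r) (e2p : τ₂ p = q) (e2r : τ₂ r = s) (x : X) :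
    ((τ₀ * kappaE p q r s) x = τ₀ x ∧ (τ₂ * kappaE p q r s) x = τ₂ x) ∨
      ((τ₀ * kappaE p q r s) x = τ₂ x ∧ (τ₂ * kappaE p q r s) x = τ₀ x) := by
  have e0r : τ₀ r = q := by rw [← e0q, h0inv]
  have e0s : τ₀ s = p := by rw [← e0p, h0inv]
  have e2q : τ₂ q = p := by rw [← e2p, h2inv]
  have e2s : τ₂ s = r := by rw [← e2r, h2inv]
  rw [kappaE_eq_swap_mul_swap hpq hpr hps hqr hqs hrs]
  by_cases hx : x = p ∨ x = q ∨ x = r ∨ x = s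
  · right
    rcases hx with rfl | rfl | rfl | rfl <;>
      simp [Equiv.swap_apply_of_ne_of_ne, hpq.symm, hps.symm, hqr.symm, hrs.symm, *]
  · left
    push Not at hx
    simp [Equiv.swap_apply_of_ne_of_ne, hx]

end Edge

theorem partial_dual_birotation_orbits_general {X : Type*} [DecidableEq X]
    (τ₀ τ₁ τ₂ : Equiv.Perm X)
    (h0inv : ∀ x, τ₀ (τ₀ x) = x)
    (h2inv : ∀ x, τ₂ (τ₂ x) = x)
    (p q r s : X)
    (hpq : p ≠ q) (hpr : p ≠ r) (hps : p ≠ s) (hqr : q ≠ r) (hqs : q ≠ s) (hrs : r ≠ s)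
    (e0p : τ₀ p = s) (e0q : τ₀ q = r) (e2p : τ₂ p = q) (e2r : τ₂ r = s) :
    ∀ x : X,
      MulAction.orbit (Subgroup.closure
          {τ₀ * kappaE p q r s, τ₁, τ₂ * kappaE p q r s} : Subgroup (Equiv.Perm X)) x =
        MulAction.orbit (Subgroup.closure {τ₀, τ₁, τ₂} : Subgroup (Equiv.Perm X)) x :=
  fun x => MulAction.orbit_closure_triple_eq_of_pointwise_swap
    (mul_kappaE_apply_cases h0inv h2inv hpq hpr hps hqr hqs hrs e0p e0q e2p e2r) x

/-- **Lemma 2.3(f) via bi-rotation systems.**  Let `(τ₀, τ₁, τ₂)` be a bi-rotation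
system on the finite set `X` of local flags and let `p, q, r, s` be the four
pairwise distinct flags of an edge `e` (`τ₀ p = s`, `τ₀ q = r`, `τ₂ p = q`,
`τ₂ r = s`).  Then the subgroup generated by `τ₀ ∘ κ`, `τ₁` and `τ₂ ∘ κ`, with
`κ = τ₀ᵉ ∘ τ₂ᵉ`, has exactly the same orbits on `X` as the subgroup generated by
`τ₀`, `τ₁` and `τ₂`; in particular partial duality relative to an edge preserves the
number of connected components of a (possibly non-orientable) ribbon graph. -/
theorem partial_dual_birotation_orbits {X : Type*} [Fintype X] [DecidableEq X]
    (τ₀ τ₁ τ₂ : Equiv.Perm X)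
    (h0inv : ∀ x, τ₀ (τ₀ x) = x) (h0fp : ∀ x, τ₀ x ≠ x)
    (h1inv : ∀ x, τ₁ (τ₁ x) = x) (h1fp : ∀ x, τ₁ x ≠ x)
    (h2inv : ∀ x, τ₂ (τ₂ x) = x) (h2fp : ∀ x, τ₂ x ≠ x)
    (p q r s : X)
    (hpq : p ≠ q) (hpr : p ≠ r) (hps : p ≠ s) (hqr : q ≠ r) (hqs : q ≠ s) (hrs : r ≠ s)
    (e0p : τ₀ p = s) (e0q : τ₀ q = r) (e2p : τ₂ p = q) (e2r : τ₂ r = s) :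
    ∀ x : X,
      MulAction.orbit (Subgroup.closure
          {τ₀ * kappaE p q r s, τ₁, τ₂ * kappaE p q r s} : Subgroup (Equiv.Perm X)) x =
        MulAction.orbit (Subgroup.closure {τ₀, τ₁, τ₂} : Subgroup (Equiv.Perm X)) x :=
  partial_dual_birotation_orbits_general τ₀ τ₁ τ₂ h0inv h2inv p q r s hpq hpr hps hqr hqs hrs e0p
    e0q e2p e2r
end
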